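/- For every two integers a, b with 2 ≤ a ≤ b, there exists a connected graph G of order b with dim_wt(G) = a. -/

import Mathlib

/-!
The witness is the lollipop graph on `b = n + 1` vertices: a clique on `0, …, a - 1` with the path
`a - 1, a, …, n` attached. Two vertices below `a - 1` are twins, so swapping them is an automorphism
and no third vertex separates them; hence every weak total resolving set contains all `a - 1` of
them (for `a = 2`: any such set in a nontrivial graph has two elements). The twins alone do not
suffice, as none of them other than `0` separates `0` from `a - 1`; adding the end `n` of the path
does: distances to `n` separate the path vertices from each other and from the twins, and distances
to `0` separate `n` from the rest of the path. Distances are computed as potentials that are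
`1`-Lipschitz along edges and drop by one along some edge at every vertex but the target.
-/

open SimpleGraph

variable {V : Type*}

/-- `W` is a resolving set: every pair of distinct vertices is resolved by some `w ∈ W`. -/
def IsResolvingSet (G : SimpleGraph V) (W : Finset V) : Prop :=
  ∀ u v : V, u ≠ v → ∃ w ∈ W, G.dist u w ≠ G.dist v w

/-- `W` is a weak total resolving set. -/
def IsWTRSet (G : SimpleGraph V) (W : Finset V) : Prop :=
  IsResolvingSet G W ∧
    ∀ v ∈ W, ∀ u : V, u ∉ W → ∃ w ∈ W, w ≠ v ∧ G.dist u w ≠ G.dist v w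

/-- `u` and `v` are twin vertices. -/
def AreTwins (G : SimpleGraph V) (u v : V) : Prop :=
  u ≠ v ∧ G.neighborSet u \ {v} = G.neighborSet v \ {u}

/-- Metric dimension. -/
noncomputable def metricDim (G : SimpleGraph V) : ℕ :=
  sInf {k | ∃ W : Finset V, W.card = k ∧ IsResolvingSet G W}

/-- Weak total metric dimension. -/
noncomputable def wtDim (G : SimpleGraph V) : ℕ :=
  sInf {k | ∃ W : Finset V, W.card = k ∧ IsWTRSet G W}

/-- Weak total resolving number: least `r` such that every `r`-subset is a WTR-set. -/
noncomputable def resWt (G : SimpleGraph V) : ℕ :=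
  sInf {r | ∀ W : Finset V, W.card = r → IsWTRSet G W}

namespace SimpleGraph

variable {V' : Type*} {G : SimpleGraph V} {G' : SimpleGraph V'}

lemma Iso.dist_le (e : G ≃g G') (u v : V) : G'.dist (e u) (e v) ≤ G.dist u v := by
  by_cases hr : G.Reachable u v
  · obtain ⟨p, hp⟩ := hr.exists_walk_length_eq_dist
    calc G'.dist (e u) (e v) ≤ (p.map e.toHom).length := SimpleGraph.dist_le _
      _ = G.dist u v := by rw [Walk.length_map, hp]
  · rw [dist_eq_zero_of_not_reachable (Iso.reachable_iff.not.mpr hr)]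
    exact Nat.zero_le _

lemma Iso.dist_eq (e : G ≃g G') (u v : V) : G'.dist (e u) (e v) = G.dist u v :=
  (e.dist_le u v).antisymm (by simpa using e.symm.dist_le (e u) (e v))

section Potential

variable {f : V → ℕ} {t : V}

lemma le_length_of_adj_le (hf : ∀ x y, G.Adj x y → f x ≤ f y + 1) (ht : f t = 0) :
    ∀ {u : V} (p : G.Walk u t), f u ≤ p.length
  | _, .nil => by simp [ht]
  | _, .cons h p => by
    have := hf _ _ h
    have := le_length_of_adj_le hf ht p
    simp only [Walk.length_cons]
    omega

lemma exists_walk_length_eq_of_descent (ht : f t = 0)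
    (hdesc : ∀ x, x ≠ t → ∃ y, G.Adj x y ∧ f y + 1 = f x) (u : V) :
    ∃ p : G.Walk u t, p.length = f u := by
  induction hn : f u generalizing u with
  | zero =>
    obtain rfl : u = t := by
      by_contra hu
      obtain ⟨y, -, hy⟩ := hdesc u hu
      omega
    exact ⟨.nil, rfl⟩
  | succ n ih =>
    obtain ⟨y, hadj, hy⟩ := hdesc u (by rintro rfl; omega)
    obtain ⟨p, hp⟩ := ih y (by omega)
    exact ⟨.cons hadj p, by simp [hp]⟩

lemma dist_eq_of_descent (hf : ∀ x y, G.Adj x y → f x ≤ f y + 1) (ht : f t = 0)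
    (hdesc : ∀ x, x ≠ t → ∃ y, G.Adj x y ∧ f y + 1 = f x) (u : V) : G.dist u t = f u := by
  obtain ⟨p, hp⟩ := exists_walk_length_eq_of_descent ht hdesc u
  obtain ⟨q, hq⟩ := p.reachable.exists_walk_length_eq_dist
  exact (hp ▸ dist_le p).antisymm (hq ▸ le_length_of_adj_le hf ht q)

end Potential

end SimpleGraph

namespace AreTwins

variable {G : SimpleGraph V} {u v : V}

lemma adj_iff (h : AreTwins G u v) {w : V} (hu : w ≠ u) (hv : w ≠ v) :
    G.Adj u w ↔ G.Adj v w := by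
  simpa [hu, hv] using Set.ext_iff.mp h.2 w

lemma adj_swap_iff [DecidableEq V] (h : AreTwins G u v) {x y : V} :
    G.Adj (Equiv.swap u v x) (Equiv.swap u v y) ↔ G.Adj x y := by
  rw [Equiv.swap_apply_def, Equiv.swap_apply_def]
  split_ifs <;> simp_all [h.adj_iff, G.adj_comm]

lemma dist_eq (h : AreTwins G u v) {w : V} (hu : w ≠ u) (hv : w ≠ v) :
    G.dist u w = G.dist v w := by
  classical
  let e : G ≃g G := ⟨Equiv.swap u v, h.adj_swap_iff⟩
  simpa [e, Equiv.swap_apply_of_ne_of_ne hu hv] using (e.dist_eq u w).symm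

lemma mem_of_isWTRSet (h : AreTwins G u v) {W : Finset V} (hW : IsWTRSet G W) : u ∈ W := by
  by_contra hu
  by_cases hv : v ∈ W
  · obtain ⟨w, hw, hwv, hne⟩ := hW.2 v hv u hu
    exact hne (h.dist_eq (ne_of_mem_of_not_mem hw hu) hwv)
  · obtain ⟨w, hw, hne⟩ := hW.1 u v h.1
    exact hne (h.dist_eq (ne_of_mem_of_not_mem hw hu) (ne_of_mem_of_not_mem hw hv))

end AreTwins

section Resolving

variable {G : SimpleGraph V} {W : Finset V}

lemma isResolvingSet_of_forall_notMem (hG : G.Connected)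
    (h : ∀ u v, u ∉ W → v ∉ W → u ≠ v → ∃ w ∈ W, G.dist u w ≠ G.dist v w) :
    IsResolvingSet G W := by
  intro u v huv
  by_cases hu : u ∈ W
  · exact ⟨u, hu, by simpa using (hG.pos_dist_of_ne huv.symm).ne⟩
  by_cases hv : v ∈ W
  · exact ⟨v, hv, by simpa using (hG.pos_dist_of_ne huv).ne'⟩
  exact h u v hu hv huv

lemma IsWTRSet.two_le_card [Nontrivial V] (hW : IsWTRSet G W) : 2 ≤ W.card := by
  obtain ⟨x, y, hxy⟩ := exists_pair_ne V
  obtain ⟨v, hv, -⟩ := hW.1 x y hxy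
  obtain ⟨u, hu⟩ := exists_ne v
  by_cases huW : u ∈ W
  · exact Finset.one_lt_card.mpr ⟨u, huW, v, hv, hu⟩
  · obtain ⟨w, hw, hwv, -⟩ := hW.2 v hv u huW
    exact Finset.one_lt_card.mpr ⟨w, hw, v, hv, hwv⟩

lemma wtDim_eq_card (hW : IsWTRSet G W) (hmin : ∀ W', IsWTRSet G W' → W.card ≤ W'.card) :
    wtDim G = W.card := by
  have hmem : W.card ∈ {k | ∃ W' : Finset V, W'.card = k ∧ IsWTRSet G W'} := ⟨W, rfl, hW⟩
  exact (Nat.sInf_le hmem).antisymm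
    (le_csInf ⟨_, hmem⟩ (by rintro _ ⟨W', rfl, hW'⟩; exact hmin W' hW'))

end Resolving

def lollipop (a n : ℕ) : SimpleGraph (Fin (n + 1)) :=
  pathGraph (n + 1) ⊔ fromRel fun i j => (i : ℕ) < a ∧ (j : ℕ) < a

section Lollipop

variable {a n : ℕ}

lemma lollipop_adj {i j : Fin (n + 1)} :
    (lollipop a n).Adj i j ↔
      (i : ℕ) ≠ j ∧ ((i : ℕ) < a ∧ (j : ℕ) < a ∨ (i : ℕ) + 1 = j ∨ (j : ℕ) + 1 = i) := by
  simp only [lollipop, sup_adj, pathGraph_adj, fromRel_adj, ne_eq, Fin.val_inj]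
  omega

lemma lollipop_connected : (lollipop a n).Connected :=
  (pathGraph_connected n).mono le_sup_left

lemma lollipop_dist_last (ha : a ≤ n + 1) (u : Fin (n + 1)) :
    (lollipop a n).dist u (Fin.last n) = if a - 1 ≤ (u : ℕ) then n - u else n + 2 - a := by
  refine dist_eq_of_descent
    (f := fun x : Fin (n + 1) => if a - 1 ≤ (x : ℕ) then n - x else n + 2 - a)
    (fun x y hxy => ?_) (by simp; omega) (fun x hx => ?_) u
  · have := lollipop_adj.mp hxy
    split_ifs <;> omega
  · have hx' : (x : ℕ) < n := Fin.val_lt_last hx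
    by_cases hxa : a - 1 ≤ (x : ℕ)
    · refine ⟨⟨x + 1, by omega⟩, lollipop_adj.mpr (by dsimp only; omega), ?_⟩
      dsimp only
      split_ifs <;> omega
    · refine ⟨⟨a - 1, by omega⟩, lollipop_adj.mpr (by dsimp only; omega), ?_⟩
      dsimp only
      split_ifs <;> omega

lemma lollipop_dist_zero (ha : 2 ≤ a) (u : Fin (n + 1)) :
    (lollipop a n).dist u 0 = if (u : ℕ) = 0 then 0 else if (u : ℕ) < a then 1 else u + 2 - a := by
  refine dist_eq_of_descent
    (f := fun x : Fin (n + 1) => if (x : ℕ) = 0 then 0 else if (x : ℕ) < a then 1 else x + 2 - a)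
    (fun x y hxy => ?_) (by simp) (fun x hx => ?_) u
  · have := lollipop_adj.mp hxy
    split_ifs <;> omega
  · have hx' : (x : ℕ) ≠ 0 := Fin.val_ne_iff.mpr hx
    by_cases hxa : (x : ℕ) < a
    · exact ⟨0, lollipop_adj.mpr (by simp; omega), by simp [hx', hxa]⟩
    · refine ⟨⟨x - 1, by omega⟩, lollipop_adj.mpr (by dsimp only; omega), ?_⟩
      dsimp only
      split_ifs <;> omega

lemma lollipop_areTwins {i j : Fin (n + 1)} (hi : (i : ℕ) < a - 1) (hj : (j : ℕ) < a - 1)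
    (hij : i ≠ j) : AreTwins (lollipop a n) i j := by
  refine ⟨hij, Set.ext fun x => ?_⟩
  have := Fin.val_ne_iff.mpr hij
  simp only [Set.mem_sdiff, mem_neighborSet, lollipop_adj, Set.mem_singleton_iff, ← Fin.val_inj]
  omega

def lollipopTwins (a n : ℕ) : Finset (Fin (n + 1)) := {i | (i : ℕ) < a - 1}

def lollipopBasis (a n : ℕ) : Finset (Fin (n + 1)) := insert (Fin.last n) (lollipopTwins a n)

lemma mem_lollipopTwins {i : Fin (n + 1)} : i ∈ lollipopTwins a n ↔ (i : ℕ) < a - 1 := by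
  simp [lollipopTwins]

lemma mem_lollipopBasis {i : Fin (n + 1)} :
    i ∈ lollipopBasis a n ↔ i = Fin.last n ∨ (i : ℕ) < a - 1 := by
  simp [lollipopBasis, mem_lollipopTwins]

lemma card_lollipopTwins (ha : a ≤ n + 1) : (lollipopTwins a n).card = a - 1 := by
  rw [lollipopTwins, Fin.card_filter_val_lt]
  omega

lemma card_lollipopBasis (h0 : 0 < a) (ha : a ≤ n + 1) : (lollipopBasis a n).card = a := by
  rw [lollipopBasis, Finset.card_insert_of_notMem (by simp [mem_lollipopTwins]; omega),
    card_lollipopTwins ha]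
  omega

lemma isWTRSet_lollipopBasis (h2 : 2 ≤ a) (ha : a ≤ n + 1) :
    IsWTRSet (lollipop a n) (lollipopBasis a n) := by
  refine ⟨isResolvingSet_of_forall_notMem lollipop_connected fun u v hu hv huv => ?_,
    fun v hv u hu => ?_⟩
  · simp only [mem_lollipopBasis, not_or] at hu hv
    have := Fin.val_lt_last hu.1
    have := Fin.val_lt_last hv.1
    have := Fin.val_ne_iff.mpr huv
    refine ⟨Fin.last n, mem_lollipopBasis.mpr (Or.inl rfl), ?_⟩
    rw [lollipop_dist_last ha, lollipop_dist_last ha, if_pos (by omega), if_pos (by omega)]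
    omega
  · simp only [mem_lollipopBasis, not_or] at hu
    have := Fin.val_lt_last hu.1
    rcases mem_lollipopBasis.mp hv with rfl | hv
    · refine ⟨0, mem_lollipopBasis.mpr (Or.inr (by simp; omega)), by simp [Fin.ext_iff]; omega, ?_⟩
      rw [lollipop_dist_zero h2, lollipop_dist_zero h2]
      simp only [Fin.val_last]
      split_ifs <;> omega
    · refine ⟨Fin.last n, mem_lollipopBasis.mpr (Or.inl rfl), ?_, ?_⟩
      · rintro rfl
        simp at hv
        omega
      · rw [lollipop_dist_last ha, lollipop_dist_last ha]
        split_ifs <;> omega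

lemma lollipopTwins_subset (h3 : 3 ≤ a) (ha : a ≤ n + 1) {W : Finset (Fin (n + 1))}
    (hW : IsWTRSet (lollipop a n) W) : lollipopTwins a n ⊆ W := by
  intro i hi
  rw [mem_lollipopTwins] at hi
  let j : Fin (n + 1) := ⟨if (i : ℕ) = 0 then 1 else 0, by split_ifs <;> omega⟩
  have hj : (j : ℕ) < a - 1 := by dsimp only [j]; split_ifs <;> omega
  have hij : i ≠ j := by rw [← Fin.val_ne_iff]; dsimp only [j]; split_ifs <;> omega
  exact (lollipop_areTwins hi hj hij).mem_of_isWTRSet hW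

lemma not_isWTRSet_lollipopTwins (h2 : 2 ≤ a) (ha : a ≤ n + 1) :
    ¬ IsWTRSet (lollipop a n) (lollipopTwins a n) := by
  intro hW
  obtain ⟨w, hw, hw0, hne⟩ := hW.2 0 (mem_lollipopTwins.mpr (by simp; omega))
    ⟨a - 1, by omega⟩ (by simp [mem_lollipopTwins])
  rw [mem_lollipopTwins] at hw
  have := Fin.val_ne_iff.mpr hw0
  -- `w` is adjacent to both `0` and `a - 1`
  apply hne
  rw [dist_eq_one_iff_adj.mpr (lollipop_adj.mpr ?_), dist_eq_one_iff_adj.mpr (lollipop_adj.mpr ?_)]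
  all_goals simp only [Fin.val_zero] at *; omega

lemma card_le_of_isWTRSet_lollipop (h2 : 2 ≤ a) (ha : a ≤ n + 1) {W : Finset (Fin (n + 1))}
    (hW : IsWTRSet (lollipop a n) W) : a ≤ W.card := by
  obtain rfl | h3 : a = 2 ∨ 3 ≤ a := by omega
  · have : Nontrivial (Fin (n + 1)) := Fin.nontrivial_iff_two_le.mpr (by omega)
    exact hW.two_le_card
  · have hsub := lollipopTwins_subset h3 ha hW
    have hne : lollipopTwins a n ≠ W := fun h => not_isWTRSet_lollipopTwins h2 ha (h ▸ hW)
    have := Finset.card_lt_card (Finset.ssubset_iff_subset_ne.mpr ⟨hsub, hne⟩)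
    rw [card_lollipopTwins ha] at this
    omega

lemma wtDim_lollipop (h2 : 2 ≤ a) (ha : a ≤ n + 1) : wtDim (lollipop a n) = a := by
  have hcard := card_lollipopBasis (by omega) ha
  refine (wtDim_eq_card (isWTRSet_lollipopBasis h2 ha) fun W hW => ?_).trans hcard
  exact hcard.trans_le (card_le_of_isWTRSet_lollipop h2 ha hW)

end Lollipop

/-- for all `2 ≤ a ≤ b` there is a connected graph of order `b` with
`dim_wt(G) = a`. -/
theorem exists_graph_order_wtDim (a b : ℕ) (ha : 2 ≤ a) (hab : a ≤ b) :
    ∃ (V : Type) (_ : Fintype V) (G : SimpleGraph V),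
      G.Connected ∧ Fintype.card V = b ∧ wtDim G = a := by
  obtain ⟨n, rfl⟩ := Nat.exists_eq_add_one_of_ne_zero (by omega : b ≠ 0)
  exact ⟨Fin (n + 1), inferInstance, lollipop a n, lollipop_connected, Fintype.card_fin _,
    wtDim_lollipop ha hab⟩
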